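/- Let 𝒟 = {-3, -4, -12, -16, -27}. These are exactly the imaginary quadratic discriminants Δ = 𝔣²Δ_K with Δ_K ∈ {-3, -4} whose order 𝒪(Δ) has class number 1 — equivalently, with fundamental discriminant -3 or -4, the positive integers 𝔣 with h(𝔣²Δ_K) = 1 are: 𝔣 ∈ {1, 2, 3} when Δ_K = -3, and 𝔣 ∈ {1, 2} when Δ_K = -4. -/
import Mathlib


open scoped BigOperators

/-- The Kronecker symbol `(Δ/ℓ)`, agreeing with the Jacobi symbol for odd `ℓ`
and given by the usual convention at `ℓ = 2`. -/
def kroneckerSymbol (Δ : ℤ) (ℓ : ℕ) : ℤ :=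
  if ℓ = 2 then (if Δ % 2 = 0 then 0 else if Δ % 8 = 1 ∨ Δ % 8 = 7 then 1 else -1)
  else jacobiSym Δ ℓ

/-- The class number `h(𝔣²Δ_K)` of the order of conductor `𝔣` in the imaginary
quadratic field of (fundamental) discriminant `Δ_K` with unit count `w`, via the
classical formula `h(𝔣²Δ_K) = (2/w)·𝔣·∏_{ℓ ∣ 𝔣}(1 - (Δ_K/ℓ)/ℓ)·h(Δ_K)`
(here `h(-3) = h(-4) = 1`). -/
def orderClassNumber (ΔK : ℤ) (w : ℚ) (f : ℕ) : ℚ :=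
  if f = 1 then 1
  else (2 / w) * f * ∏ ℓ ∈ f.primeFactors, (1 - (kroneckerSymbol ΔK ℓ : ℚ) / ℓ)

lemma kro_le_one (Δ : ℤ) (ℓ : ℕ) : kroneckerSymbol Δ ℓ ≤ 1 := by
  unfold kroneckerSymbol
  split
  · split
    · norm_num
    · split <;> norm_num
  · rcases jacobiSym.trichotomy Δ ℓ with h | h | h <;> rw [h] <;> norm_num

lemma totient_le_prod (ΔK : ℤ) (f : ℕ) (hf : 0 < f) :
    (Nat.totient f : ℚ) ≤ (f : ℚ) * ∏ ℓ ∈ f.primeFactors, (1 - (kroneckerSymbol ΔK ℓ : ℚ) / ℓ) := by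
  have hfacpos : ∀ ℓ ∈ f.primeFactors, (2:ℚ) ≤ (ℓ:ℚ) := by
    intro ℓ hℓ
    exact_mod_cast (Nat.prime_of_mem_primeFactors hℓ).two_le
  have key : ∏ ℓ ∈ f.primeFactors, (1 - 1 / (ℓ:ℚ)) ≤
      ∏ ℓ ∈ f.primeFactors, (1 - (kroneckerSymbol ΔK ℓ : ℚ) / ℓ) := by
    apply Finset.prod_le_prod
    · intro ℓ hℓ
      have h2 := hfacpos ℓ hℓ
      have : (1:ℚ)/ℓ ≤ 1/2 := by
        apply div_le_div_of_nonneg_left (by norm_num) (by norm_num) h2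
      linarith
    · intro ℓ hℓ
      have h2 := hfacpos ℓ hℓ
      have hk : (kroneckerSymbol ΔK ℓ : ℚ) ≤ 1 := by exact_mod_cast kro_le_one ΔK ℓ
      have hℓpos : (0:ℚ) < ℓ := by linarith
      have := (div_le_div_iff_of_pos_right hℓpos).mpr hk
      linarith
  have htot : (Nat.totient f : ℚ) = (f : ℚ) * ∏ ℓ ∈ f.primeFactors, (1 - 1 / (ℓ:ℚ)) := by
    have h := Nat.totient_mul_prod_primeFactors f
    have hc : ((Nat.totient f : ℚ)) * ∏ p ∈ f.primeFactors, (p:ℚ) =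
        (f:ℚ) * ∏ p ∈ f.primeFactors, ((p:ℚ) - 1) := by
      have hcast := congrArg (fun n : ℕ => (n : ℚ)) h
      push_cast at hcast
      have e : ∏ p ∈ f.primeFactors, (((p - 1 : ℕ)) : ℚ) =
          ∏ p ∈ f.primeFactors, ((p:ℚ) - 1) := by
        apply Finset.prod_congr rfl
        intro p hp
        have h1 : 1 ≤ p := (Nat.prime_of_mem_primeFactors hp).one_lt.le
        push_cast [Nat.cast_sub h1]
        ring
      rw [e] at hcast
      exact hcast
    have hprodpos : (0:ℚ) < ∏ p ∈ f.primeFactors, (p:ℚ) := by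
      apply Finset.prod_pos
      intro p hp
      have := hfacpos p hp
      linarith
    have : ∏ ℓ ∈ f.primeFactors, (1 - 1 / (ℓ:ℚ)) =
        (∏ p ∈ f.primeFactors, ((p:ℚ) - 1)) / ∏ p ∈ f.primeFactors, (p:ℚ) := by
      rw [← Finset.prod_div_distrib]
      apply Finset.prod_congr rfl
      intro p hp
      have hp2 := hfacpos p hp
      field_simp
    rw [this, ← mul_div_assoc, eq_div_iff hprodpos.ne']
    linarith [hc]
  rw [htot]
  have hfpos : (0:ℚ) ≤ (f:ℚ) := by positivity
  exact mul_le_mul_of_nonneg_left key hfpos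

lemma totient_small (f : ℕ) (hf : 0 < f) (h3 : Nat.totient f ≤ 3) : f ∣ 12 := by
  rw [Nat.dvd_iff_prime_pow_dvd_dvd]
  intro p k hp hpk
  have hpp : p.Prime := hp
  have hp2 : 2 ≤ p := hpp.two_le
  have htpos : 0 < Nat.totient f := Nat.totient_pos.mpr hf
  rcases Nat.eq_zero_or_pos k with rfl | hk
  · simpa using one_dvd _
  have hpf : p ∣ f := dvd_trans (dvd_pow_self p hk.ne') hpk
  have hdvd : p - 1 ∣ Nat.totient f := by
    have := Nat.totient_dvd_of_dvd hpf
    rwa [Nat.totient_prime hpp] at this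
  have hple : p - 1 ≤ 3 := Nat.le_of_dvd htpos hdvd |>.trans h3
  have hp4 : p ≤ 4 := by omega
  interval_cases p
  · -- p = 2
    have hk2 : k ≤ 2 := by
      by_contra hk3
      have h8 : (2:ℕ)^3 ∣ f := dvd_trans (pow_dvd_pow 2 (by omega)) hpk
      have : Nat.totient 8 ∣ Nat.totient f := Nat.totient_dvd_of_dvd h8
      rw [show Nat.totient 8 = 4 from by decide] at this
      have := Nat.le_of_dvd htpos this
      omega
    exact dvd_trans (pow_dvd_pow 2 hk2) (by norm_num)
  · -- p = 3
    have hk1 : k ≤ 1 := by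
      by_contra hk2
      have h9 : (3:ℕ)^2 ∣ f := dvd_trans (pow_dvd_pow 3 (by omega)) hpk
      have : Nat.totient 9 ∣ Nat.totient f := Nat.totient_dvd_of_dvd h9
      rw [show Nat.totient 9 = 6 from by decide] at this
      have := Nat.le_of_dvd htpos this
      omega
    exact dvd_trans (pow_dvd_pow 3 hk1) (by norm_num)
  · exact absurd hpp (by decide)

lemma totient_bound (ΔK : ℤ) (w : ℚ) (f : ℕ) (hw : 0 < w) (hf : 0 < f) (hf1 : f ≠ 1)
    (h : orderClassNumber ΔK w f = 1) : (Nat.totient f : ℚ) ≤ w / 2 := by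
  rw [orderClassNumber, if_neg hf1] at h
  have hb := totient_le_prod ΔK f hf
  set P := ∏ ℓ ∈ f.primeFactors, (1 - (kroneckerSymbol ΔK ℓ : ℚ) / ℓ) with hP
  have hw' : w ≠ 0 := ne_of_gt hw
  have hX : (f : ℚ) * P = w / 2 := by
    field_simp at h
    linarith
  rw [hX] at hb
  exact hb

-- primeFactors computations
lemma pf2 : (2:ℕ).primeFactors = {2} := Nat.Prime.primeFactors Nat.prime_two
lemma pf3 : (3:ℕ).primeFactors = {3} := Nat.Prime.primeFactors Nat.prime_three
lemma pf4 : (4:ℕ).primeFactors = {2} := by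
  rw [show (4:ℕ) = 2^2 by norm_num, Nat.primeFactors_pow _ (by norm_num), pf2]
lemma pf6 : (6:ℕ).primeFactors = {2,3} := by
  rw [show (6:ℕ) = 2*3 by norm_num, Nat.primeFactors_mul (by norm_num) (by norm_num), pf2, pf3]
  rfl
lemma pf12 : (12:ℕ).primeFactors = {2,3} := by
  rw [show (12:ℕ) = 2*6 by norm_num, Nat.primeFactors_mul (by norm_num) (by norm_num), pf2, pf6]
  rfl

lemma kr32 : kroneckerSymbol (-3) 2 = -1 := by norm_num [kroneckerSymbol]
lemma kr42 : kroneckerSymbol (-4) 2 = 0 := by norm_num [kroneckerSymbol]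
lemma kr33 : kroneckerSymbol (-3) 3 = 0 := by rw [kroneckerSymbol]; norm_num
lemma kr43 : kroneckerSymbol (-4) 3 = -1 := by rw [kroneckerSymbol]; norm_num

lemma prodpair (ΔK : ℤ) : ∏ ℓ ∈ ({2,3} : Finset ℕ), (1 - (kroneckerSymbol ΔK ℓ : ℚ) / ℓ) =
    (1 - (kroneckerSymbol ΔK 2 : ℚ) / 2) * (1 - (kroneckerSymbol ΔK 3 : ℚ) / 3) := by
  rw [Finset.prod_pair (by norm_num)]
  norm_num

-- evaluations
lemma ev32 : orderClassNumber (-3) 6 2 = 1 := by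
  rw [orderClassNumber, if_neg (by norm_num), pf2, Finset.prod_singleton, kr32]; norm_num
lemma ev33 : orderClassNumber (-3) 6 3 = 1 := by
  rw [orderClassNumber, if_neg (by norm_num), pf3, Finset.prod_singleton, kr33]; norm_num
lemma ev34 : orderClassNumber (-3) 6 4 = 2 := by
  rw [orderClassNumber, if_neg (by norm_num), pf4, Finset.prod_singleton, kr32]; norm_num
lemma ev36 : orderClassNumber (-3) 6 6 = 3 := by
  rw [orderClassNumber, if_neg (by norm_num), pf6, prodpair, kr32, kr33]; norm_num
lemma ev312 : orderClassNumber (-3) 6 12 = 6 := by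
  rw [orderClassNumber, if_neg (by norm_num), pf12, prodpair, kr32, kr33]; norm_num
lemma ev42 : orderClassNumber (-4) 4 2 = 1 := by
  rw [orderClassNumber, if_neg (by norm_num), pf2, Finset.prod_singleton, kr42]; norm_num
lemma ev43 : orderClassNumber (-4) 4 3 = 2 := by
  rw [orderClassNumber, if_neg (by norm_num), pf3, Finset.prod_singleton, kr43]; norm_num
lemma ev44 : orderClassNumber (-4) 4 4 = 2 := by
  rw [orderClassNumber, if_neg (by norm_num), pf4, Finset.prod_singleton, kr42]; norm_num
lemma ev46 : orderClassNumber (-4) 4 6 = 4 := by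
  rw [orderClassNumber, if_neg (by norm_num), pf6, prodpair, kr42, kr43]; norm_num
lemma ev412 : orderClassNumber (-4) 4 12 = 8 := by
  rw [orderClassNumber, if_neg (by norm_num), pf12, prodpair, kr42, kr43]; norm_num

lemma ev1 (ΔK : ℤ) (w : ℚ) : orderClassNumber ΔK w 1 = 1 := by
  rw [orderClassNumber, if_pos rfl]

lemma dvd12 (ΔK : ℤ) (w : ℚ) (hw : 0 < w) (hw6 : w ≤ 6) (f : ℕ) (hf : 0 < f)
    (h : orderClassNumber ΔK w f = 1) : f ∣ 12 := by
  rcases eq_or_ne f 1 with rfl | hf1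
  · norm_num
  have := totient_bound ΔK w f hw hf hf1 h
  have h3 : (Nat.totient f : ℚ) ≤ 3 := le_trans this (by linarith)
  have h3' : Nat.totient f ≤ 3 := by exact_mod_cast h3
  exact totient_small f hf h3'

lemma set3 : {f : ℕ | 0 < f ∧ orderClassNumber (-3) 6 f = 1} = {1, 2, 3} := by
  ext f
  simp only [Set.mem_setOf_eq, Set.mem_insert_iff, Set.mem_singleton_iff]
  constructor
  · rintro ⟨hf, h⟩
    have hdvd := dvd12 (-3) 6 (by norm_num) (by norm_num) f hf h
    have h12 : f ≤ 12 := Nat.le_of_dvd (by norm_num) hdvd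
    interval_cases f <;> first
      | omega
      | (exfalso; revert hdvd; decide)
      | (exfalso; rw [ev34] at h; norm_num at h)
      | (exfalso; rw [ev36] at h; norm_num at h)
      | (exfalso; rw [ev312] at h; norm_num at h)
  · rintro (rfl | rfl | rfl)
    · exact ⟨by norm_num, ev1 _ _⟩
    · exact ⟨by norm_num, ev32⟩
    · exact ⟨by norm_num, ev33⟩

lemma set4 : {f : ℕ | 0 < f ∧ orderClassNumber (-4) 4 f = 1} = {1, 2} := by
  ext f
  simp only [Set.mem_setOf_eq, Set.mem_insert_iff, Set.mem_singleton_iff]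
  constructor
  · rintro ⟨hf, h⟩
    have hdvd := dvd12 (-4) 4 (by norm_num) (by norm_num) f hf h
    have h12 : f ≤ 12 := Nat.le_of_dvd (by norm_num) hdvd
    interval_cases f <;> first
      | omega
      | (exfalso; revert hdvd; decide)
      | (exfalso; rw [ev43] at h; norm_num at h)
      | (exfalso; rw [ev44] at h; norm_num at h)
      | (exfalso; rw [ev46] at h; norm_num at h)
      | (exfalso; rw [ev412] at h; norm_num at h)
  · rintro (rfl | rfl)
    · exact ⟨by norm_num, ev1 _ _⟩
    · exact ⟨by norm_num, ev42⟩

/-- `𝒟 = {-3, -4, -12, -16, -27}` is exactly the set of imaginary quadratic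
discriminants `Δ = 𝔣²Δ_K` with `Δ_K ∈ {-3, -4}` whose order has class number 1:
with fundamental discriminant `-3` (where `w = 6`) the conductors `𝔣` with
`h(𝔣²·(-3)) = 1` are exactly `{1, 2, 3}`, with fundamental discriminant `-4`
(where `w = 4`) they are exactly `{1, 2}`. -/
theorem classNumberOne_orders_in_minus3_minus4 :
    {f : ℕ | 0 < f ∧ orderClassNumber (-3) 6 f = 1} = {1, 2, 3} ∧
    {f : ℕ | 0 < f ∧ orderClassNumber (-4) 4 f = 1} = {1, 2} ∧
    {Δ : ℤ | ∃ f : ℕ, 0 < f ∧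
        ((Δ = (f : ℤ) ^ 2 * (-3) ∧ orderClassNumber (-3) 6 f = 1) ∨
         (Δ = (f : ℤ) ^ 2 * (-4) ∧ orderClassNumber (-4) 4 f = 1))} =
      {-3, -4, -12, -16, -27} := by
  refine ⟨set3, set4, ?_⟩
  ext Δ
  simp only [Set.mem_setOf_eq, Set.mem_insert_iff, Set.mem_singleton_iff]
  constructor
  · rintro ⟨f, hf, (⟨rfl, h⟩ | ⟨rfl, h⟩)⟩
    · have : f ∈ ({1, 2, 3} : Set ℕ) := by rw [← set3]; exact ⟨hf, h⟩
      rcases this with rfl | rfl | rfl <;> norm_num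
    · have : f ∈ ({1, 2} : Set ℕ) := by rw [← set4]; exact ⟨hf, h⟩
      rcases this with rfl | rfl <;> norm_num
  · rintro (rfl | rfl | rfl | rfl | rfl)
    · exact ⟨1, by norm_num, Or.inl ⟨by norm_num, ev1 _ _⟩⟩
    · exact ⟨1, by norm_num, Or.inr ⟨by norm_num, ev1 _ _⟩⟩
    · exact ⟨2, by norm_num, Or.inl ⟨by norm_num, ev32⟩⟩
    · exact ⟨2, by norm_num, Or.inr ⟨by norm_num, ev42⟩⟩
    · exact ⟨3, by norm_num, Or.inl ⟨by norm_num, ev33⟩⟩
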